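/- Let τ ∈ ℂ with Im τ > 0 and let θ: ℂ → ℂ be holomorphic, not identically zero, with θ(0) = 0, θ(z+1) = θ(z) and θ(z+τ) = −exp(−2πiz)·θ(z) for all z. Let f, g: ℂ → ℂ be holomorphic with f(z+1) = f(z), f(z+τ) = exp(−4πiz)·f(z), g(z+1) = g(z), g(z+τ) = exp(−4πiz)·g(z) (theta functions of order 2). Then for all z_1, z_2 ∈ ℂ with θ(z_1 − z_2) ≠ 0 and θ(z_2 − z_1) ≠ 0: g(z_2)/θ(z_2−z_1) · (f′(z_1)·θ(z_1−z_2) − f(z_1)·θ′(z_1−z_2))/θ(z_1−z_2)^2 − f(z_1)/θ(z_1−z_2) · (g′(z_2)·θ(z_2−z_1) − g(z_2)·θ′(z_2−z_1))/θ(z_2−z_1)^2 + g(z_1)/θ(z_1−z_2) · (f′(z_2)·θ(z_2−z_1) − f(z_2)·θ′(z_2−z_1))/θ(z_2−z_1)^2 − f(z_2)/θ(z_2−z_1) · (g′(z_1)·θ(z_1−z_2) − g(z_1)·θ′(z_1−z_2))/θ(z_1−z_2)^2 = 0. (This identity expresses the Poisson commutativity {ψ_2(f), ψ_2(g)} = 0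 of the images of f and g under the map ψ_2(f) = f(z_1)/θ(z_1−z_2)·e_1 + f(z_2)/θ(z_2−z_1)·e_2 in the Poisson algebra b_2 with brackets {z_i,z_j} = {e_i,e_j} = {e_i,z_i} = 0 and {e_i,z_j} = −2e_i for i ≠ j.) -/

import Mathlib

noncomputable section

open MeasureTheory Complex Set

namespace PoissonAux

/-- `ee w = exp (2 π i w)` -/
def ee (w : ℂ) : ℂ := Complex.exp (2 * Real.pi * Complex.I * w)

lemma ee_add (a b : ℂ) : ee (a + b) = ee a * ee b := by
  simp only [ee, mul_add, Complex.exp_add]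

lemma ee_ne (a : ℂ) : ee a ≠ 0 := Complex.exp_ne_zero _

lemma ee_int (n : ℤ) : ee n = 1 := by
  rw [ee, show (2 * (Real.pi : ℂ) * Complex.I * n) = n * (2 * Real.pi * Complex.I) by ring]
  exact Complex.exp_int_mul_two_pi_mul_I n

lemma ee_zero : ee 0 = 1 := by simp [ee]

lemma ee_neg_mul (a : ℂ) : ee (-a) * ee a = 1 := by
  rw [← ee_add, neg_add_cancel, ee_zero]

lemma ee_diff : Differentiable ℂ ee :=
  Complex.differentiable_exp.comp (differentiable_id.const_mul _)

lemma ee_cont : Continuous ee := ee_diff.continuous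

lemma hasDerivAt_ee (w : ℂ) : HasDerivAt ee (ee w * (2 * Real.pi * Complex.I)) w := by
  have h := ((hasDerivAt_id w).const_mul (2 * (Real.pi:ℂ) * Complex.I)).cexp
  simp [ee, mul_one] at h ⊢
  exact h

/-- the `n`-th Fourier coefficient of `F` along the horizontal line at height `y` -/
def coef (F : ℂ → ℂ) (n : ℤ) (y : ℝ) : ℂ :=
  ∫ x in (0:ℝ)..1, F (x + y * Complex.I) * ee (-(n:ℂ) * (x + y * Complex.I))

lemma cont_line (y : ℝ) : Continuous (fun x : ℝ => (x : ℂ) + (y : ℂ) * Complex.I) :=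
  Complex.continuous_ofReal.add continuous_const

lemma integrand_integrable (F : ℂ → ℂ) (hF : Continuous F) (n : ℤ) (y : ℝ) :
    IntervalIntegrable
      (fun x : ℝ => F ((x:ℂ) + (y:ℂ) * Complex.I) * ee (-(n:ℂ) * ((x:ℂ) + (y:ℂ) * Complex.I)))
      MeasureTheory.volume 0 1 :=
  ((hF.comp (cont_line y)).mul
    (ee_cont.comp (continuous_const.mul (cont_line y)))).intervalIntegrable _ _

lemma coef_add (F G : ℂ → ℂ) (hF : Continuous F) (hG : Continuous G) (n : ℤ) (y : ℝ) :
    coef (fun z => F z + G z) n y = coef F n y + coef G n y := by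
  unfold coef
  simp only [add_mul]
  exact intervalIntegral.integral_add (integrand_integrable F hF n y)
    (integrand_integrable G hG n y)

lemma coef_sub (F G : ℂ → ℂ) (hF : Continuous F) (hG : Continuous G) (n : ℤ) (y : ℝ) :
    coef (fun z => F z - G z) n y = coef F n y - coef G n y := by
  unfold coef
  simp only [sub_mul]
  exact intervalIntegral.integral_sub (integrand_integrable F hF n y)
    (integrand_integrable G hG n y)

lemma coef_const_mul (c : ℂ) (F : ℂ → ℂ) (n : ℤ) (y : ℝ) :
    coef (fun z => c * F z) n y = c * coef F n y := by
  unfold coef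
  simp only [mul_assoc]
  exact intervalIntegral.integral_const_mul c _

lemma coef_zero_fn (F : ℂ → ℂ) (hF : ∀ z, F z = 0) (n : ℤ) (y : ℝ) :
    coef F n y = 0 := by
  unfold coef
  simp [hF]

/-- constancy of the Fourier coefficients in the height of the line -/
lemma coef_const (F : ℂ → ℂ) (hF : Differentiable ℂ F) (hper : ∀ z, F (z + 1) = F z)
    (n : ℤ) (y₁ y₂ : ℝ) : coef F n y₁ = coef F n y₂ := by
  set G : ℂ → ℂ := fun z => F z * ee (-(n:ℂ) * z) with hG
  have hGdiff : Differentiable ℂ G :=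
    hF.mul (ee_diff.comp (differentiable_id.const_mul _))
  have hGper : ∀ z, G (z + 1) = G z := by
    intro z
    simp only [hG, hper]
    rw [show (-(n:ℂ) * (z + 1)) = -(n:ℂ) * z + ((-n : ℤ) : ℂ) by push_cast; ring,
      ee_add, ee_int, mul_one]
  have key := Complex.integral_boundary_rect_eq_zero_of_differentiableOn G
      ⟨0, y₁⟩ ⟨1, y₂⟩ hGdiff.differentiableOn
  simp only [show ((⟨0, y₁⟩:ℂ)).re = 0 from rfl, show ((⟨0, y₁⟩:ℂ)).im = y₁ from rfl,
    show ((⟨1, y₂⟩:ℂ)).re = 1 from rfl, show ((⟨1, y₂⟩:ℂ)).im = y₂ from rfl,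
    smul_eq_mul] at key
  have hvert : ∀ y : ℝ, G (((1:ℝ):ℂ) + (y:ℂ) * Complex.I) = G (((0:ℝ):ℂ) + (y:ℂ) * Complex.I) := by
    intro y
    rw [show ((1:ℝ):ℂ) + (y:ℂ) * Complex.I = ((0:ℝ):ℂ) + (y:ℂ) * Complex.I + 1 by push_cast; ring,
      hGper]
  have hvint : (∫ x : ℝ in y₁..y₂, G (((1:ℝ):ℂ) + (x:ℂ) * Complex.I))
      = ∫ x : ℝ in y₁..y₂, G (((0:ℝ):ℂ) + (x:ℂ) * Complex.I) :=
    intervalIntegral.integral_congr (fun y _ => hvert y)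
  rw [hvint] at key
  show (∫ x : ℝ in (0:ℝ)..1, G ((x:ℂ) + (y₁:ℂ) * Complex.I))
      = ∫ x : ℝ in (0:ℝ)..1, G ((x:ℂ) + (y₂:ℂ) * Complex.I)
  linear_combination key

lemma periodic_shift (Φ : ℝ → ℂ) (hper : Function.Periodic Φ 1) (c : ℝ) :
    (∫ x in (0:ℝ)..1, Φ (x + c)) = ∫ x in (0:ℝ)..1, Φ x := by
  rw [intervalIntegral.integral_comp_add_right]
  have h := hper.intervalIntegral_add_eq c 0
  simpa [add_comm] using h

lemma periodic_reflect (Φ : ℝ → ℂ) (hper : Function.Periodic Φ 1) :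
    (∫ x in (0:ℝ)..1, Φ (-x)) = ∫ x in (0:ℝ)..1, Φ x := by
  rw [intervalIntegral.integral_comp_neg]
  have h := hper.intervalIntegral_add_eq (-1) 0
  norm_num at h
  convert h using 2 <;> norm_num

lemma coef_eq_line_zero (F : ℂ → ℂ) (n : ℤ) :
    coef F n 0 = ∫ x in (0:ℝ)..1, F x * ee (-(n:ℂ) * x) := by
  unfold coef
  norm_num

/-- transformation law for Fourier coefficients under the `τ`-quasiperiodicity -/
lemma coef_rec (τ : ℂ) (F : ℂ → ℂ) (hF : Differentiable ℂ F) (hper : ∀ z, F (z + 1) = F z)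
    (k : ℤ) (ε : ℂ) (hlaw : ∀ z, F (z + τ) = ε * ee (-(k:ℂ) * z) * F z) (n : ℤ) :
    coef F n 0 = ε * ee (-(n:ℂ) * τ) * coef F (n + k) 0 := by
  have h1 : coef F n 0 = coef F n τ.im := coef_const F hF hper n 0 τ.im
  set Φ : ℝ → ℂ := fun t => F t * ee (-(((n + k : ℤ)):ℂ) * t) with hΦ
  have hΦper : Function.Periodic Φ 1 := by
    intro t
    simp only [hΦ]
    push_cast
    rw [hper]
    rw [show (-((n:ℂ) + (k:ℂ)) * ((t:ℂ) + 1)) = -((n:ℂ)+(k:ℂ)) * (t:ℂ) + ((-(n+k) : ℤ):ℂ) by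
      push_cast; ring, ee_add, ee_int, mul_one]
  have key : coef F n τ.im
      = (ε * ee (-(n:ℂ) * τ)) * ∫ x in (0:ℝ)..1, Φ (x + (-τ.re)) := by
    rw [coef, ← intervalIntegral.integral_const_mul]
    apply intervalIntegral.integral_congr
    intro x _
    dsimp only
    have hxy : ((x:ℂ) + (τ.im:ℂ) * Complex.I) = (((x - τ.re : ℝ)):ℂ) + τ := by
      simp [Complex.ext_iff]
    rw [hxy, hlaw]
    simp only [hΦ]
    rw [show ((x + -τ.re : ℝ) : ℂ) = ((x - τ.re : ℝ):ℂ) by push_cast; ring]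
    rw [show (-(n:ℂ) * ((((x - τ.re : ℝ)):ℂ) + τ))
        = (-(n:ℂ) * (((x - τ.re : ℝ)):ℂ)) + (-(n:ℂ) * τ) by ring, ee_add]
    rw [show (-(((n + k : ℤ)):ℂ) * (((x - τ.re : ℝ)):ℂ))
        = (-(k:ℂ) * (((x - τ.re : ℝ)):ℂ)) + (-(n:ℂ) * (((x - τ.re : ℝ)):ℂ)) by push_cast; ring,
      ee_add]
    ring
  rw [h1, key, periodic_shift Φ hΦper, coef_eq_line_zero]

/-- reflection: coefficients of `z ↦ e^{2πiz} F(-z)` -/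
lemma coef_reflect (F : ℂ → ℂ) (hper : ∀ z, F (z + 1) = F z) (n : ℤ) :
    coef (fun z => ee z * F (-z)) n 0 = coef F (1 - n) 0 := by
  rw [coef_eq_line_zero, coef_eq_line_zero]
  set Φ : ℝ → ℂ := fun t => F t * ee (-(((1 - n : ℤ)):ℂ) * t) with hΦ
  have hΦper : Function.Periodic Φ 1 := by
    intro t
    simp only [hΦ]
    rw [show ((t + 1 : ℝ):ℂ) = (t:ℂ) + 1 by push_cast; ring, hper]
    rw [show (-(((1 - n : ℤ)):ℂ) * ((t:ℂ) + 1))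
        = -(((1 - n : ℤ)):ℂ) * (t:ℂ) + ((n - 1 : ℤ):ℂ) by push_cast; ring,
      ee_add, ee_int, mul_one]
  have h2 : (∫ x in (0:ℝ)..1, (fun z => ee z * F (-z)) ((x:ℝ):ℂ) * ee (-(n:ℂ) * x))
      = ∫ x in (0:ℝ)..1, Φ (-x) := by
    apply intervalIntegral.integral_congr
    intro x _
    dsimp only
    simp only [hΦ]
    push_cast
    rw [show (-(1 - (n:ℂ)) * -(x:ℂ)) = (x:ℂ) + (-(n:ℂ) * (x:ℂ)) by ring, ee_add]
    ring
  rw [h2, periodic_reflect Φ hΦper]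

/-- a continuous `1`-periodic function on `ℝ` with all Fourier coefficients zero vanishes -/
lemma line_zero (G : ℝ → ℂ) (hG : Continuous G) (hper : Function.Periodic G 1)
    (h : ∀ n : ℤ, (∫ x in (0:ℝ)..1, G x * ee (-(n:ℂ) * x)) = 0) : ∀ x, G x = 0 := by
  haveI : Fact (0 < (1:ℝ)) := ⟨one_pos⟩
  set GG : AddCircle (1:ℝ) → ℂ := hper.lift with hGG
  have hGGcont : Continuous GG := continuous_coinduced_dom.mpr hG
  have hGGcoeff : ∀ i : ℤ, fourierCoeff GG i = 0 := by
    intro i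
    rw [fourierCoeff_eq_intervalIntegral GG i 0]
    have : (∫ x in (0:ℝ)..(0+1), fourier (-i) ((x:ℝ) : AddCircle (1:ℝ)) • GG ((x:ℝ) : AddCircle (1:ℝ))) = 0 := by
      rw [zero_add, ← h i]
      apply intervalIntegral.integral_congr
      intro x _
      simp only [hGG, hper.lift_coe, fourier_coe_apply, smul_eq_mul]
      rw [mul_comm]
      congr 1
      unfold ee
      congr 1
      push_cast
      ring
    rw [this, smul_zero]
  set Fc : C(AddCircle (1:ℝ), ℂ) := ⟨GG, hGGcont⟩ with hFc
  set u := ContinuousMap.toLp (E := ℂ) 2 AddCircle.haarAddCircle ℂ Fc with hu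
  have hae : (u : AddCircle (1:ℝ) → ℂ) =ᵐ[AddCircle.haarAddCircle] GG :=
    ContinuousMap.coeFn_toLp (p := 2) AddCircle.haarAddCircle (𝕜 := ℂ) Fc
  have hucoeff : ∀ i : ℤ, fourierCoeff (u : AddCircle (1:ℝ) → ℂ) i = 0 := by
    intro i
    rw [show fourierCoeff (u : AddCircle (1:ℝ) → ℂ) i = fourierCoeff GG i by
      unfold fourierCoeff
      exact integral_congr_ae (hae.mono fun x hx => by simp only [hx])]
    exact hGGcoeff i
  have hu0 : u = 0 := by
    have h0 : fourierBasis.repr u = 0 := by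
      ext i
      rw [fourierBasis_repr]
      simpa using hucoeff i
    simpa using (LinearIsometryEquiv.map_eq_zero_iff fourierBasis.repr).mp h0
  have hae0 : GG =ᵐ[AddCircle.haarAddCircle] (fun _ => (0:ℂ)) := by
    refine hae.symm.trans ?_
    rw [hu0]
    exact Lp.coeFn_zero ℂ 2 _
  have hGG0 : GG = fun _ => (0:ℂ) :=
    (Continuous.ae_eq_iff_eq AddCircle.haarAddCircle hGGcont continuous_const).mp hae0
  intro x
  have := congrFun hGG0 (x : AddCircle (1:ℝ))
  rwa [hGG, hper.lift_coe] at this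

/-- an entire `1`-periodic function with all strip Fourier coefficients zero vanishes -/
lemma coef_vanish (F : ℂ → ℂ) (hF : Differentiable ℂ F) (hper : ∀ z, F (z + 1) = F z)
    (h : ∀ n : ℤ, coef F n 0 = 0) : ∀ z, F z = 0 := by
  intro z
  set y := z.im with hy
  set G : ℝ → ℂ := fun x => F ((x:ℂ) + (y:ℂ) * Complex.I) with hG
  have hGc : Continuous G := hF.continuous.comp (cont_line y)
  have hGper : Function.Periodic G 1 := by
    intro x
    simp only [hG]
    rw [show (((x + 1 : ℝ)):ℂ) + (y:ℂ) * Complex.I = ((x:ℂ) + (y:ℂ) * Complex.I) + 1 by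
      push_cast; ring, hper]
  have key : ∀ n : ℤ, (∫ x in (0:ℝ)..1, G x * ee (-(n:ℂ) * x)) = 0 := by
    intro n
    have h2 : coef F n y = 0 := by rw [coef_const F hF hper n y 0]; exact h n
    rw [coef] at h2
    rw [show (∫ x in (0:ℝ)..1, F ((x:ℂ) + (y:ℂ) * Complex.I)
          * ee (-(n:ℂ) * ((x:ℂ) + (y:ℂ) * Complex.I)))
        = ∫ x in (0:ℝ)..1, ee (-(n:ℂ) * ((y:ℂ) * Complex.I)) * (G x * ee (-(n:ℂ) * x)) from
      intervalIntegral.integral_congr (fun x _ => by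
        simp only [hG]
        rw [show (-(n:ℂ) * ((x:ℂ) + (y:ℂ) * Complex.I))
            = (-(n:ℂ) * ((y:ℂ) * Complex.I)) + (-(n:ℂ) * (x:ℂ)) by ring, ee_add]
        ring)] at h2
    rw [intervalIntegral.integral_const_mul] at h2
    exact (mul_eq_zero.mp h2).resolve_left (ee_ne _)
  have := line_zero G hGc hGper key z.re
  simp only [hG] at this
  rwa [hy, Complex.re_add_im] at this

lemma int_rec1 (d : ℤ → ℂ) (c : ℤ → ℂ) (hc : ∀ n, c n ≠ 0)
    (hrec : ∀ n : ℤ, d (n + 1) = c n * d n) (h0 : d 0 = 0) : ∀ n : ℤ, d n = 0 := by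
  intro n
  induction n using Int.induction_on with
  | zero => exact h0
  | succ k ih => rw [hrec k, ih, mul_zero]
  | pred k ih =>
    have h := hrec (-(k:ℤ) - 1)
    rw [show (-(k:ℤ) - 1 + 1) = -(k:ℤ) by ring, ih] at h
    exact (mul_eq_zero.mp h.symm).resolve_left (hc _)

lemma int_rec2 (d : ℤ → ℂ) (c : ℤ → ℂ) (hc : ∀ n, c n ≠ 0)
    (hrec : ∀ n : ℤ, d (n + 2) = c n * d n) (h0 : d 0 = 0) (h1 : d 1 = 0) : ∀ n : ℤ, d n = 0 := by
  have key : ∀ n : ℤ, d n = 0 ∧ d (n + 1) = 0 := by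
    intro n
    induction n using Int.induction_on with
    | zero => exact ⟨h0, h1⟩
    | succ k ih =>
      refine ⟨ih.2, ?_⟩
      rw [show ((k:ℤ) + 1 + 1) = (k:ℤ) + 2 by ring, hrec k, ih.1, mul_zero]
    | pred k ih =>
      constructor
      · have h := hrec (-(k:ℤ) - 1)
        rw [show (-(k:ℤ) - 1 + 2) = -(k:ℤ) + 1 by ring, ih.2] at h
        exact (mul_eq_zero.mp h.symm).resolve_left (hc _)
      · rw [show (-(k:ℤ) - 1 + 1) = -(k:ℤ) by ring]
        exact ih.1
  exact fun n => (key n).1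

section Theta

variable (τ : ℂ)

/-- the key oddness relation for a normalized order-1 theta function -/
lemma theta_odd (θ : ℂ → ℂ) (hθdiff : Differentiable ℂ θ)
    (hθ1 : ∀ z, θ (z + 1) = θ z)
    (hθτ : ∀ z, θ (z + τ) = -1 * ee (-(1:ℂ) * z) * θ z) :
    ∀ z, θ (-z) = -(ee (-z)) * θ z := by
  have hθτ' : ∀ z, θ (-z - τ) = -(ee (-(z + τ))) * θ (-z) := by
    intro z
    have h := hθτ (-z - τ)
    rw [show (-z - τ + τ) = -z by ring, show (-(1:ℂ) * (-z - τ)) = z + τ by ring] at h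
    have h1 := ee_neg_mul (z + τ)
    linear_combination (ee (-(z + τ))) * h - (θ (-z - τ)) * h1
  set D : ℂ → ℂ := fun z => ee z * θ (-z) + θ z with hD
  have hDdiff : Differentiable ℂ D := by
    apply Differentiable.add
    · exact ee_diff.mul (hθdiff.comp differentiable_neg)
    · exact hθdiff
  have hDper : ∀ z, D (z + 1) = D z := by
    intro z
    simp only [hD]
    rw [show (-(z+1)) = (-z - 1) by ring]
    rw [show θ (-z - 1) = θ (-z) from by
      have h := hθ1 (-z - 1)
      rw [show (-z - 1 + 1 : ℂ) = -z by ring] at h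
      exact h.symm]
    rw [hθ1]
    rw [show ee (z + 1) = ee z from by
      rw [show (z + 1 : ℂ) = z + ((1:ℤ):ℂ) by norm_num, ee_add, ee_int, mul_one]]
  have hDτ : ∀ z, D (z + τ) = -1 * ee (-(1:ℂ) * z) * D z := by
    intro z
    simp only [hD]
    rw [show (-(z + τ)) = -z - τ by ring, hθτ' z, hθτ z]
    have h1 := ee_neg_mul (z + τ)
    have h3 : ee (-(1:ℂ) * z) * ee z = 1 := by
      rw [show (-(1:ℂ) * z) = -z by ring]
      exact ee_neg_mul z
    linear_combination (θ (-z)) * h3 - (θ (-z)) * h1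
  have hrecθ : ∀ n : ℤ, coef θ n 0 = -1 * ee (-(n:ℂ) * τ) * coef θ (n + 1) 0 := by
    intro n
    exact coef_rec τ θ hθdiff hθ1 1 (-1) (by intro z; push_cast; exact hθτ z) n
  have hD0 : coef D 0 0 = 0 := by
    have hcadd : coef D 0 0 = coef (fun z => ee z * θ (-z)) 0 0 + coef θ 0 0 :=
      coef_add _ θ (ee_cont.mul (hθdiff.continuous.comp continuous_neg)) hθdiff.continuous 0 0
    rw [hcadd, coef_reflect θ hθ1 0]
    have h := hrecθ 0
    simp only [ee_zero, Int.cast_zero, neg_zero, zero_mul, mul_one, zero_add] at h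
    norm_num
    rw [h]
    ring
  have hall : ∀ n : ℤ, coef D n 0 = 0 := by
    apply int_rec1 (fun n => coef D n 0) (fun n => (-1 * ee (-(n:ℂ) * τ))⁻¹)
    · intro n
      exact inv_ne_zero (mul_ne_zero (by norm_num) (ee_ne _))
    · intro n
      have e := coef_rec τ D hDdiff hDper 1 (-1) (by intro z; push_cast; exact hDτ z) n
      have hcne : (-1 * ee (-(n:ℂ) * τ)) ≠ 0 := mul_ne_zero (by norm_num) (ee_ne _)
      rw [e, ← mul_assoc, inv_mul_cancel₀ hcne, one_mul]
    · exact hD0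
  have hDzero := coef_vanish D hDdiff hDper hall
  intro z
  have h := hDzero z
  simp only [hD] at h
  have h2 := ee_neg_mul z
  linear_combination (ee (-z)) * h - (θ (-z)) * h2

/-- an order-2 theta function with vanishing coefficients 0 and 1 is identically zero -/
lemma order2_ext (F : ℂ → ℂ) (hF : Differentiable ℂ F) (hper : ∀ z, F (z + 1) = F z)
    (hlaw : ∀ z, F (z + τ) = ee (-(2:ℂ) * z) * F z)
    (h0 : coef F 0 0 = 0) (h1 : coef F 1 0 = 0) : ∀ z, F z = 0 := by
  apply coef_vanish F hF hper
  apply int_rec2 (fun n => coef F n 0) (fun n => (ee (-(n:ℂ) * τ))⁻¹)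
    (fun n => inv_ne_zero (ee_ne _)) _ h0 h1
  intro n
  have e := coef_rec τ F hF hper 2 1 (by intro z; push_cast; rw [one_mul]; exact hlaw z) n
  rw [one_mul] at e
  show coef F (n + 2) 0 = (ee (-(n:ℂ) * τ))⁻¹ * coef F n 0
  rw [e, ← mul_assoc, inv_mul_cancel₀ (ee_ne _), one_mul]

end Theta

/-- the nonvanishing locus of a nonzero entire function is dense -/
lemma dense_cozero (F : ℂ → ℂ) (hF : Differentiable ℂ F) (hne : ∃ z, F z ≠ 0) :
    Dense {z : ℂ | F z ≠ 0} := by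
  intro x
  rw [Metric.mem_closure_iff]
  intro ε hε
  by_contra hcon
  push_neg at hcon
  have hev : F =ᶠ[nhds x] 0 := by
    filter_upwards [Metric.ball_mem_nhds x hε] with w hw
    by_contra hFw
    exact absurd (hcon w hFw) (not_le.mpr (by rwa [Metric.mem_ball, dist_comm] at hw))
  have hzero := AnalyticOnNhd.eqOn_zero_of_preconnected_of_eventuallyEq_zero
    (fun z _ => hF.analyticAt z) isPreconnected_univ (Set.mem_univ x) hev
  obtain ⟨z, hz⟩ := hne
  exact hz (hzero (Set.mem_univ z))

lemma cozero_open (F : ℂ → ℂ) (hF : Continuous F) : IsOpen {z : ℂ | F z ≠ 0} :=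
  isOpen_compl_singleton.preimage hF

/-- Structure theorem: the antisymmetrized product of two order-2 theta functions factors
through the order-1 theta function. -/
lemma struct (τ : ℂ) (θ : ℂ → ℂ) (hθdiff : Differentiable ℂ θ) (hθne : ∃ z, θ z ≠ 0)
    (hθ0 : θ 0 = 0) (hθ1 : ∀ z, θ (z + 1) = θ z)
    (hθτ : ∀ z, θ (z + τ) = -1 * ee (-(1:ℂ) * z) * θ z)
    (f g : ℂ → ℂ) (hf : Differentiable ℂ f) (hg : Differentiable ℂ g)
    (hf1 : ∀ z, f (z + 1) = f z) (hfτ : ∀ z, f (z + τ) = ee (-(2:ℂ) * z) * f z)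
    (hg1 : ∀ z, g (z + 1) = g z) (hgτ : ∀ z, g (z + τ) = ee (-(2:ℂ) * z) * g z) :
    ∃ C : ℂ, ∀ z w : ℂ, f z * g w - f w * g z = C * ee w * (θ (z - w) * θ (z + w)) := by
  have hodd := theta_odd τ θ hθdiff hθ1 hθτ
  have hΘdiff : ∀ w : ℂ, Differentiable ℂ (fun z => θ (z - w) * θ (z + w)) := fun w =>
    (hθdiff.comp (differentiable_id.sub_const w)).mul (hθdiff.comp (differentiable_id.add_const w))
  have hΘper : ∀ w z : ℂ, θ ((z + 1) - w) * θ ((z + 1) + w) = θ (z - w) * θ (z + w) := by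
    intro w z
    rw [show (z + 1) - w = (z - w) + 1 by ring, show (z + 1) + w = (z + w) + 1 by ring, hθ1, hθ1]
  have hΘτ : ∀ w z : ℂ, θ ((z + τ) - w) * θ ((z + τ) + w)
      = ee (-(2:ℂ) * z) * (θ (z - w) * θ (z + w)) := by
    intro w z
    rw [show (z + τ) - w = (z - w) + τ by ring, show (z + τ) + w = (z + w) + τ by ring,
      hθτ, hθτ]
    have h1 : ee (-(1:ℂ) * (z - w)) * ee (-(1:ℂ) * (z + w)) = ee (-(2:ℂ) * z) := by
      rw [← ee_add]; congr 1; ring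
    linear_combination (θ (z - w) * θ (z + w)) * h1
  have hcontf : Continuous fun z => f z := hf.continuous
  have hcontg : Continuous fun z => g z := hg.continuous
  by_cases hdet : coef f 0 0 * coef g 1 0 - coef f 1 0 * coef g 0 0 = 0
  · -- degenerate case: f and g are linearly dependent
    refine ⟨0, ?_⟩
    have hcomb : ∀ α β : ℂ, α * coef g 0 0 = β * coef f 0 0 → α * coef g 1 0 = β * coef f 1 0 →
        ∀ z, α * g z = β * f z := by
      intro α β e0 e1
      have hc1 : Continuous fun z => α * g z := continuous_const.mul hcontg
      have hc2 : Continuous fun z => β * f z := continuous_const.mul hcontf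
      have hzero := order2_ext τ (fun z => α * g z - β * f z)
        ((hg.const_mul α).sub (hf.const_mul β))
        (by intro z; rw [hg1, hf1])
        (by intro z; rw [hgτ, hfτ]; ring)
        (by rw [coef_sub _ _ hc1 hc2, coef_const_mul, coef_const_mul]
            rw [e0]; ring)
        (by rw [coef_sub _ _ hc1 hc2, coef_const_mul, coef_const_mul]
            rw [e1]; ring)
      intro z
      have h10 : α * g z - β * f z = 0 := hzero z
      linear_combination h10
    intro z w
    rw [zero_mul, zero_mul]
    rcases eq_or_ne (coef f 0 0) 0 with hb0 | hb0
    · rcases eq_or_ne (coef f 1 0) 0 with hb1 | hb1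
      · have hf0 := order2_ext τ f hf hf1 hfτ hb0 hb1
        rw [hf0 z, hf0 w]; ring
      · have Q := hcomb (coef f 1 0) (coef g 1 0)
          (by linear_combination -hdet) (by ring)
        have hQ : coef f 1 0 * (f z * g w - f w * g z) = 0 := by
          linear_combination (f z) * Q w - (f w) * Q z
        exact (mul_eq_zero.mp hQ).resolve_left hb1
    · have P := hcomb (coef f 0 0) (coef g 0 0)
        (by ring) (by linear_combination hdet)
      have hP : coef f 0 0 * (f z * g w - f w * g z) = 0 := by
        linear_combination (f z) * P w - (f w) * P z
      exact (mul_eq_zero.mp hP).resolve_left hb0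
  · -- main case
    set lam : ℂ → ℂ := fun w =>
      (coef (fun z => θ (z - w) * θ (z + w)) 0 0 * coef g 1 0
        - coef (fun z => θ (z - w) * θ (z + w)) 1 0 * coef g 0 0)
      / (coef f 0 0 * coef g 1 0 - coef f 1 0 * coef g 0 0) with hlam
    set mu : ℂ → ℂ := fun w =>
      (coef f 0 0 * coef (fun z => θ (z - w) * θ (z + w)) 1 0
        - coef f 1 0 * coef (fun z => θ (z - w) * θ (z + w)) 0 0)
      / (coef f 0 0 * coef g 1 0 - coef f 1 0 * coef g 0 0) with hmu
    have P1 : ∀ w z, θ (z - w) * θ (z + w) = lam w * f z + mu w * g z := by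
      intro w
      have hcont1 : Continuous fun z => θ (z - w) * θ (z + w) := (hΘdiff w).continuous
      have hcontlf : Continuous fun z => lam w * f z := continuous_const.mul hcontf
      have hcontmg : Continuous fun z => mu w * g z := continuous_const.mul hcontg
      have hcont2 : Continuous fun z => lam w * f z + mu w * g z := hcontlf.add hcontmg
      have ccalc : ∀ i : ℤ, coef (fun z => θ (z - w) * θ (z + w) - (lam w * f z + mu w * g z)) i 0
          = coef (fun z => θ (z - w) * θ (z + w)) i 0
            - (lam w * coef f i 0 + mu w * coef g i 0) := by
        intro i
        rw [coef_sub _ _ hcont1 hcont2, coef_add _ _ hcontlf hcontmg,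
          coef_const_mul, coef_const_mul]
      have hzero := order2_ext τ (fun z => θ (z - w) * θ (z + w) - (lam w * f z + mu w * g z))
        ((hΘdiff w).sub ((hf.const_mul (lam w)).add (hg.const_mul (mu w))))
        (by intro z; rw [hΘper w z, hf1, hg1])
        (by intro z; rw [hΘτ w z, hfτ z, hgτ z]; ring)
        (by rw [ccalc 0]; simp only [hlam, hmu];
              rw [div_mul_eq_mul_div, div_mul_eq_mul_div, ← add_div, sub_eq_zero, eq_div_iff hdet]; ring)
        (by rw [ccalc 1]; simp only [hlam, hmu];
              rw [div_mul_eq_mul_div, div_mul_eq_mul_div, ← add_div, sub_eq_zero, eq_div_iff hdet]; ring)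
      intro z
      have h10 : θ (z - w) * θ (z + w) - (lam w * f z + mu w * g z) = 0 := hzero z
      linear_combination h10
    have P2 : ∀ w, lam w * f w + mu w * g w = 0 := by
      intro w
      have h := P1 w w
      rw [sub_self, hθ0, zero_mul] at h
      exact h.symm
    have P3 : ∀ w z, lam w * (f z * g w - f w * g z) = g w * (θ (z - w) * θ (z + w)) := by
      intro w z
      linear_combination (-(g w)) * (P1 w z) + (-(g z)) * (P2 w)
    have hgne : ∃ q, g q ≠ 0 := by
      by_contra hcon
      push_neg at hcon
      apply hdet
      rw [coef_zero_fn g hcon 0 0, coef_zero_fn g hcon 1 0]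
      ring
    obtain ⟨q, hq⟩ := hgne
    set Cc : ℂ := lam q * ee q / g q with hCc
    have P5 : ∀ w, θ (w - q) ≠ 0 → θ (w + q) ≠ 0 → lam w = Cc * ee (-w) * g w := by
      intro w h1 h2
      have e1 := P3 q w
      have e2 := P3 w q
      rw [show q - w = -(w - q) by ring, hodd (w - q), show q + w = w + q by ring] at e2
      have hZ : (lam w * g q - lam q * g w * ee (-(w - q))) * (θ (w - q) * θ (w + q)) = 0 := by
        linear_combination (-(lam w)) * e1 + (-(lam q)) * e2
      have hZ2 : lam w * g q - lam q * g w * ee (-(w - q)) = 0 :=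
        (mul_eq_zero.mp hZ).resolve_right (mul_ne_zero h1 h2)
      have h7 : ee q * ee (-w) = ee (-(w - q)) := by rw [← ee_add]; congr 1; ring
      rw [hCc, div_mul_eq_mul_div, div_mul_eq_mul_div, eq_div_iff hq]
      linear_combination hZ2 - (lam q * g w) * h7
    have key : ∀ w, θ (w - q) ≠ 0 → θ (w + q) ≠ 0 → g w ≠ 0 → ∀ z,
        Cc * ee (-w) * (f z * g w - f w * g z) = θ (z - w) * θ (z + w) := by
      intro w h1 h2 h3 z
      have h6 := P3 w z
      rw [P5 w h1 h2] at h6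
      apply mul_left_cancel₀ h3
      linear_combination h6
    obtain ⟨z0, hz0⟩ := hθne
    have hUdense : Dense {w : ℂ | (θ (w - q) ≠ 0 ∧ θ (w + q) ≠ 0) ∧ g w ≠ 0} := by
      have d1 : Dense {w : ℂ | θ (w - q) ≠ 0} :=
        dense_cozero _ (hθdiff.comp (differentiable_id.sub_const q))
          ⟨z0 + q, by simpa using hz0⟩
      have d2 : Dense {w : ℂ | θ (w + q) ≠ 0} :=
        dense_cozero _ (hθdiff.comp (differentiable_id.add_const q))
          ⟨z0 - q, by simpa using hz0⟩
      have d3 : Dense {w : ℂ | g w ≠ 0} := dense_cozero g hg ⟨q, hq⟩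
      have o1 : IsOpen {w : ℂ | θ (w - q) ≠ 0} :=
        cozero_open _ (hθdiff.continuous.comp (continuous_id.sub continuous_const))
      have o2 : IsOpen {w : ℂ | θ (w + q) ≠ 0} :=
        cozero_open _ (hθdiff.continuous.comp (continuous_id.add continuous_const))
      exact (d1.inter_of_isOpen_left d2 o1).inter_of_isOpen_left d3 (o1.inter o2)
    have hCcne : Cc ≠ 0 := by
      intro h0
      obtain ⟨w, ⟨hw1, hw2⟩, hw3⟩ := hUdense.nonempty
      have d1 : Dense {z : ℂ | θ (z - w) ≠ 0} :=
        dense_cozero _ (hθdiff.comp (differentiable_id.sub_const w))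
          ⟨z0 + w, by simpa using hz0⟩
      have d2 : Dense {z : ℂ | θ (z + w) ≠ 0} :=
        dense_cozero _ (hθdiff.comp (differentiable_id.add_const w))
          ⟨z0 - w, by simpa using hz0⟩
      have o1 : IsOpen {z : ℂ | θ (z - w) ≠ 0} :=
        cozero_open _ (hθdiff.continuous.comp (continuous_id.sub continuous_const))
      obtain ⟨z, hz1, hz2⟩ := (d1.inter_of_isOpen_left d2 o1).nonempty
      have hk := key w hw1 hw2 hw3 z
      rw [h0, zero_mul, zero_mul] at hk
      exact (mul_ne_zero hz1 hz2) hk.symm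
    refine ⟨Cc⁻¹, ?_⟩
    intro z w
    have hfuneq : (fun w => Cc * ee (-w) * (f z * g w - f w * g z))
        = (fun w => θ (z - w) * θ (z + w)) := by
      apply Continuous.ext_on hUdense
      · exact (continuous_const.mul (ee_cont.comp continuous_neg)).mul
          ((continuous_const.mul hcontg).sub (hcontf.mul continuous_const))
      · exact (hθdiff.continuous.comp (continuous_const.sub continuous_id)).mul
          (hθdiff.continuous.comp (continuous_const.add continuous_id))
      · rintro w ⟨⟨h1, h2⟩, h3⟩
        exact key w h1 h2 h3 z
    have h8 : Cc * ee (-w) * (f z * g w - f w * g z) = θ (z - w) * θ (z + w) :=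
      congrFun hfuneq w
    rw [← h8]
    have h9 := ee_neg_mul w
    rw [show Cc⁻¹ * ee w * (Cc * ee (-w) * (f z * g w - f w * g z))
        = (Cc⁻¹ * Cc) * ((ee (-w) * ee w) * (f z * g w - f w * g z)) by ring,
      inv_mul_cancel₀ hCcne, h9, one_mul, one_mul]

/-- derivative version of the oddness relation -/
lemma theta_deriv_odd (θ : ℂ → ℂ) (hθdiff : Differentiable ℂ θ)
    (hodd : ∀ z, θ (-z) = -(ee (-z)) * θ z) :
    ∀ u, deriv θ (-u) = ee (-u) * (deriv θ u - (2 * Real.pi * Complex.I) * θ u) := by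
  intro u
  have hL : HasDerivAt (fun z => θ (-z)) (deriv θ (-u) * (-1)) u := by
    have h := ((hθdiff (-u)).hasDerivAt).comp u ((hasDerivAt_id u).neg)
    simp at h ⊢
    exact h
  have hEE : HasDerivAt (fun z : ℂ => ee (-z)) ((ee (-u) * (2 * Real.pi * Complex.I)) * (-1)) u := by
    have h := (hasDerivAt_ee (-u)).comp u ((hasDerivAt_id u).neg)
    simp at h ⊢
    exact h
  have hR : HasDerivAt (fun z => -(ee (-z)) * θ z)
      ((-((ee (-u) * (2 * Real.pi * Complex.I)) * (-1))) * θ u + (-(ee (-u))) * deriv θ u) u :=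
    hEE.neg.mul ((hθdiff u).hasDerivAt)
  have hfun : (fun z => θ (-z)) = (fun z => -(ee (-z)) * θ z) := funext hodd
  have hL' : HasDerivAt (fun z => -(ee (-z)) * θ z) (deriv θ (-u) * (-1)) u := hfun ▸ hL
  have huniq := hL'.unique hR
  linear_combination -huniq

end PoissonAux

open PoissonAux in
theorem poisson_commutativity_of_order_two_theta_images
    (τ : ℂ) (hτ : 0 < τ.im) (θ : ℂ → ℂ)
    (hθdiff : Differentiable ℂ θ) (hθne : ∃ z, θ z ≠ 0) (hθ0 : θ 0 = 0)
    (hθ1 : ∀ z, θ (z + 1) = θ z)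
    (hθτ : ∀ z, θ (z + τ) = -Complex.exp (-2 * Real.pi * Complex.I * z) * θ z)
    (f g : ℂ → ℂ) (hf : Differentiable ℂ f) (hg : Differentiable ℂ g)
    (hf1 : ∀ z, f (z + 1) = f z)
    (hfτ : ∀ z, f (z + τ) = Complex.exp (-4 * Real.pi * Complex.I * z) * f z)
    (hg1 : ∀ z, g (z + 1) = g z)
    (hgτ : ∀ z, g (z + τ) = Complex.exp (-4 * Real.pi * Complex.I * z) * g z) :
    ∀ z₁ z₂ : ℂ, θ (z₁ - z₂) ≠ 0 → θ (z₂ - z₁) ≠ 0 →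
      g z₂ / θ (z₂ - z₁) *
            ((deriv f z₁ * θ (z₁ - z₂) - f z₁ * deriv θ (z₁ - z₂)) /
              θ (z₁ - z₂) ^ 2) -
          f z₁ / θ (z₁ - z₂) *
            ((deriv g z₂ * θ (z₂ - z₁) - g z₂ * deriv θ (z₂ - z₁)) /
              θ (z₂ - z₁) ^ 2) +
          g z₁ / θ (z₁ - z₂) *
            ((deriv f z₂ * θ (z₂ - z₁) - f z₂ * deriv θ (z₂ - z₁)) /
              θ (z₂ - z₁) ^ 2) -
          f z₂ / θ (z₂ - z₁) *
            ((deriv g z₁ * θ (z₁ - z₂) - g z₁ * deriv θ (z₁ - z₂)) /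
              θ (z₁ - z₂) ^ 2) = 0 := by
  have hθτ' : ∀ z, θ (z + τ) = -1 * ee (-(1:ℂ) * z) * θ z := by
    intro z
    rw [hθτ z, show ee (-(1:ℂ) * z) = Complex.exp (-2 * Real.pi * Complex.I * z) from by
      unfold ee; congr 1; push_cast; ring]
    ring
  have hfτ' : ∀ z, f (z + τ) = ee (-(2:ℂ) * z) * f z := by
    intro z
    rw [hfτ z, show ee (-(2:ℂ) * z) = Complex.exp (-4 * Real.pi * Complex.I * z) from by
      unfold ee; congr 1; push_cast; ring]
  have hgτ' : ∀ z, g (z + τ) = ee (-(2:ℂ) * z) * g z := by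
    intro z
    rw [hgτ z, show ee (-(2:ℂ) * z) = Complex.exp (-4 * Real.pi * Complex.I * z) from by
      unfold ee; congr 1; push_cast; ring]
  have hodd := theta_odd τ θ hθdiff hθ1 hθτ'
  have hodd' := theta_deriv_odd θ hθdiff hodd
  obtain ⟨C, hstar⟩ := struct τ θ hθdiff hθne hθ0 hθ1 hθτ' f g hf hg hf1 hfτ' hg1 hgτ'
  intro z₁ z₂ hu hv
  have hodd4 : θ (z₂ - z₁) = -(ee (-(z₁ - z₂))) * θ (z₁ - z₂) := by
    rw [show z₂ - z₁ = -(z₁ - z₂) by ring]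
    exact hodd _
  have hodd5 : deriv θ (z₂ - z₁)
      = ee (-(z₁ - z₂)) * (deriv θ (z₁ - z₂) - (2 * Real.pi * Complex.I) * θ (z₁ - z₂)) := by
    rw [show z₂ - z₁ = -(z₁ - z₂) by ring]
    exact hodd' _
  have H1 := hstar z₁ z₂
  -- derivative in the first variable
  have hF1 : HasDerivAt (fun z => f z * g z₂ - f z₂ * g z)
      (deriv f z₁ * g z₂ - f z₂ * deriv g z₁) z₁ :=
    ((hf z₁).hasDerivAt.mul_const (g z₂)).sub (((hg z₁).hasDerivAt).const_mul (f z₂))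
  have hΘ1 : HasDerivAt (fun z => θ (z - z₂)) (deriv θ (z₁ - z₂)) z₁ := by
    have h := ((hθdiff (z₁ - z₂)).hasDerivAt).comp z₁ ((hasDerivAt_id z₁).sub_const z₂)
    simp at h ⊢
    exact h
  have hΘ2 : HasDerivAt (fun z => θ (z + z₂)) (deriv θ (z₁ + z₂)) z₁ := by
    have h := ((hθdiff (z₁ + z₂)).hasDerivAt).comp z₁ ((hasDerivAt_id z₁).add_const z₂)
    simp at h ⊢
    exact h
  have hG1 : HasDerivAt (fun z => C * ee z₂ * (θ (z - z₂) * θ (z + z₂)))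
      (C * ee z₂ * (deriv θ (z₁ - z₂) * θ (z₁ + z₂) + θ (z₁ - z₂) * deriv θ (z₁ + z₂))) z₁ :=
    (hΘ1.mul hΘ2).const_mul (C * ee z₂)
  have hfe : (fun z => f z * g z₂ - f z₂ * g z)
      = (fun z => C * ee z₂ * (θ (z - z₂) * θ (z + z₂))) := funext fun z => hstar z z₂
  have H2 := (hfe ▸ hF1).unique hG1
  -- derivative in the second variable
  have hF2 : HasDerivAt (fun w => f z₁ * g w - f w * g z₁)
      (f z₁ * deriv g z₂ - deriv f z₂ * g z₁) z₂ :=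
    (((hg z₂).hasDerivAt).const_mul (f z₁)).sub ((hf z₂).hasDerivAt.mul_const (g z₁))
  have hEw : HasDerivAt (fun w => C * ee w) (C * (ee z₂ * (2 * Real.pi * Complex.I))) z₂ :=
    (hasDerivAt_ee z₂).const_mul C
  have hθa : HasDerivAt (fun w => θ (z₁ - w)) (-(deriv θ (z₁ - z₂))) z₂ := by
    have h := ((hθdiff (z₁ - z₂)).hasDerivAt).comp z₂ ((hasDerivAt_id z₂).const_sub z₁)
    simp at h ⊢
    exact h
  have hθb : HasDerivAt (fun w => θ (z₁ + w)) (deriv θ (z₁ + z₂)) z₂ := by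
    have h := ((hθdiff (z₁ + z₂)).hasDerivAt).comp z₂ ((hasDerivAt_id z₂).const_add z₁)
    simp at h ⊢
    exact h
  have hG2 : HasDerivAt (fun w => C * ee w * (θ (z₁ - w) * θ (z₁ + w)))
      (C * (ee z₂ * (2 * Real.pi * Complex.I)) * (θ (z₁ - z₂) * θ (z₁ + z₂))
        + C * ee z₂ * ((-(deriv θ (z₁ - z₂))) * θ (z₁ + z₂)
          + θ (z₁ - z₂) * deriv θ (z₁ + z₂))) z₂ :=
    hEw.mul (hθa.mul hθb)
  have hfe2 : (fun w => f z₁ * g w - f w * g z₁)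
      = (fun w => C * ee w * (θ (z₁ - w) * θ (z₁ + w))) := funext fun w => hstar z₁ w
  have H3 := (hfe2 ▸ hF2).unique hG2
  have hNzero : θ (z₁ - z₂) * θ (z₂ - z₁)
        * ((deriv f z₁ * g z₂ - f z₂ * deriv g z₁) - (f z₁ * deriv g z₂ - deriv f z₂ * g z₁))
      - (f z₁ * g z₂ - f z₂ * g z₁)
        * (deriv θ (z₁ - z₂) * θ (z₂ - z₁) - deriv θ (z₂ - z₁) * θ (z₁ - z₂)) = 0 := by
    linear_combination (θ (z₁ - z₂) * θ (z₂ - z₁)) * H2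
      - (θ (z₁ - z₂) * θ (z₂ - z₁)) * H3
      + (θ (z₁ - z₂) * deriv θ (z₂ - z₁) - deriv θ (z₁ - z₂) * θ (z₂ - z₁)) * H1
      + (C * ee z₂ * θ (z₁ - z₂) * θ (z₁ + z₂)
          * (deriv θ (z₁ - z₂) - 2 * Real.pi * Complex.I * θ (z₁ - z₂))) * hodd4
      + (C * ee z₂ * θ (z₁ - z₂) * θ (z₁ + z₂) * θ (z₁ - z₂)) * hodd5
  have hab : θ (z₁ - z₂) ^ 2 * θ (z₂ - z₁) ^ 2 ≠ 0 := mul_ne_zero (pow_ne_zero 2 hu) (pow_ne_zero 2 hv)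
  have t1 : ∀ p X : ℂ, p / θ (z₂ - z₁) * (X / θ (z₁ - z₂) ^ 2)
      = p * X * θ (z₂ - z₁) / (θ (z₁ - z₂) ^ 2 * θ (z₂ - z₁) ^ 2) := by
    intro p X
    rw [div_mul_div_comm, div_eq_div_iff (mul_ne_zero hv (pow_ne_zero 2 hu)) hab]
    ring
  have t2 : ∀ p X : ℂ, p / θ (z₁ - z₂) * (X / θ (z₂ - z₁) ^ 2)
      = p * X * θ (z₁ - z₂) / (θ (z₁ - z₂) ^ 2 * θ (z₂ - z₁) ^ 2) := by
    intro p X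
    rw [div_mul_div_comm, div_eq_div_iff (mul_ne_zero hu (pow_ne_zero 2 hv)) hab]
    ring
  rw [t1, t2, t2, t1, div_sub_div_same, ← add_div, div_sub_div_same, div_eq_zero_iff]
  left
  linear_combination hNzero
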